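/- If K is a critical clique of a graph G of size more than k+1, then G has a 3-leaf power edition of size at most k if and only if the graph obtained by deleting |K| - (k+1) vertices of K has a 3-leaf power edition of size at most k. -/

import Mathlib

open SimpleGraph

/-- `K` is a clique which is a module of `G`. -/
def IsCliqueModule {V : Type*} (G : SimpleGraph V) (K : Set V) : Prop :=
  G.IsClique K ∧ ∀ x ∈ K, ∀ y ∈ K, ∀ z ∉ K, (G.Adj x z ↔ G.Adj y z)

/-- A critical clique of `G`: a maximal clique module. -/
def IsCriticalClique {V : Type*} (G : SimpleGraph V) (K : Set V) : Prop :=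
  K.Nonempty ∧ IsCliqueModule G K ∧ ∀ K', IsCliqueModule G K' → K ⊆ K' → K' = K

/-- The graph `G + F` obtained from `G` by toggling (adding or deleting) the pairs in `F`:
its edge set is the symmetric difference of `E(G)` and `F`. -/
def editGraph {V : Type*} (G : SimpleGraph V) (F : Set (Sym2 V)) : SimpleGraph V where
  Adj u v := u ≠ v ∧ ((G.Adj u v ∧ s(u, v) ∉ F) ∨ (¬ G.Adj u v ∧ s(u, v) ∈ F))
  symm := ⟨by
    intro u v h
    refine ⟨h.1.symm, ?_⟩
    rw [Sym2.eq_swap]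
    rcases h.2 with ⟨h1, h2⟩ | ⟨h1, h2⟩
    · exact Or.inl ⟨h1.symm, h2⟩
    · exact Or.inr ⟨fun hh => h1 hh.symm, h2⟩⟩
  loopless := ⟨fun u h => h.1 rfl⟩

/-- The bull: a triangle `0,1,2` with pendant vertices `3` (on `1`) and `4` (on `2`). -/
def bull : SimpleGraph (Fin 5) :=
  SimpleGraph.fromRel (fun a b => (a, b) ∈ ([(0,1),(0,2),(1,2),(1,3),(2,4)] : List (Fin 5 × Fin 5)))

/-- The dart: a diamond `0,1,2,3` (missing edge `(0,1)`) plus a pendant vertex `4`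
adjacent to the degree-3 vertex `2`. -/
def dart : SimpleGraph (Fin 5) :=
  SimpleGraph.fromRel (fun a b => (a, b) ∈ ([(0,2),(0,3),(1,2),(1,3),(2,3),(2,4)] : List (Fin 5 × Fin 5)))

/-- The gem: a path `0-1-2-3` plus a dominating vertex `4`. -/
def gem : SimpleGraph (Fin 5) :=
  SimpleGraph.fromRel (fun a b => (a, b) ∈ ([(0,1),(1,2),(2,3),(0,4),(1,4),(2,4),(3,4)] : List (Fin 5 × Fin 5)))

/-- A graph is a 3-leaf power iff it is {bull, dart, gem, chordless `C≥4`}-free. -/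
def Is3LeafPower {V : Type*} (H : SimpleGraph V) : Prop :=
  IsEmpty (bull ↪g H) ∧ IsEmpty (dart ↪g H) ∧ IsEmpty (gem ↪g H) ∧
    ∀ n, 4 ≤ n → IsEmpty (SimpleGraph.cycleGraph n ↪g H)

/-- `G` admits a 3-leaf power edition of size at most `k`. -/
def Has3LPEdition {V : Type*} (G : SimpleGraph V) (k : ℕ) : Prop :=
  ∃ F : Finset (Sym2 V), F.card ≤ k ∧ Is3LeafPower (editGraph G ↑F)

/-!
Deleting vertices preserves being a 3-leaf power, so an edition of `G` restricts to one of `G - D`.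
Conversely, let `F` be an edition of `G - D` with `|F| ≤ k`. An edit joining `K` to its complement
contains only one vertex of `K`, so some `v` among the `k + 1` vertices of `K \ D` lies on no such
edit. Discarding every edit that touches `K` keeps `K` a clique module and changes nothing on
`(K \ {v})ᶜ ⊆ Dᶜ`: an edit there touching `K` would join `v` to another vertex of `K`. Finally, the
bull, the dart, the gem and the holes have no true twins, so an induced copy of one of them meets a
clique module in at most one vertex, which can be moved to `v`; hence the new edition of `G` is
still a 3-leaf power.
-/

section

variable {V W : Type*}

@[simp]
lemma editGraph_adj (G : SimpleGraph V) (F : Set (Sym2 V)) (u w : V) :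
    (editGraph G F).Adj u w ↔
      u ≠ w ∧ ((G.Adj u w ∧ s(u, w) ∉ F) ∨ (¬ G.Adj u w ∧ s(u, w) ∈ F)) := Iff.rfl

lemma editGraph_induce (G : SimpleGraph V) (F : Set (Sym2 V)) (s : Set V) :
    (editGraph G F).induce s = editGraph (G.induce s) (Sym2.map (↑) ⁻¹' F) := by
  ext a b
  simp [Subtype.ext_iff]

lemma induce_editGraph_congr (G : SimpleGraph V) {F₁ F₂ : Set (Sym2 V)} {s : Set V}
    (h : ∀ a ∈ s, ∀ b ∈ s, a ≠ b → (s(a, b) ∈ F₁ ↔ s(a, b) ∈ F₂)) :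
    (editGraph G F₁).induce s = (editGraph G F₂).induce s := by
  ext a b
  simp only [comap_adj, Function.Embedding.coe_subtype, editGraph_adj]
  exact and_congr_right fun hab => by rw [h a a.2 b b.2 hab]

lemma IsCliqueModule.comap {B : SimpleGraph W} {H : SimpleGraph V} {S : Set V} (f : B ↪g H)
    (hS : IsCliqueModule H S) : IsCliqueModule B (f ⁻¹' S) :=
  ⟨fun _ hx _ hy hxy => f.map_adj_iff.mp (hS.1 hx hy (f.injective.ne hxy)),
    fun x hx y hy z hz => by simpa only [f.map_adj_iff] using hS.2 (f x) hx (f y) hy (f z) hz⟩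

lemma IsCliqueModule.editGraph {G : SimpleGraph V} {K : Set V} {F : Set (Sym2 V)}
    (hK : IsCliqueModule G K) (hF : ∀ e ∈ F, ∀ x ∈ e, x ∉ K) :
    IsCliqueModule (editGraph G F) K := by
  have hFK : ∀ x y, x ∈ K → s(x, y) ∉ F := fun x y hx he =>
    hF _ he x (Sym2.mem_mk_left x y) hx
  refine ⟨fun x hx y hy hxy => ⟨hxy, .inl ⟨hK.1 hx hy hxy, hFK x y hx⟩⟩,
    fun x hx y hy z hz => ?_⟩
  have hxz : x ≠ z := fun h => hz (h ▸ hx)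
  have hyz : y ≠ z := fun h => hz (h ▸ hy)
  simp [hxz, hyz, hFK x z hx, hFK y z hy, hK.2 x hx y hy z hz]

def TwinFree (B : SimpleGraph W) : Prop :=
  ∀ x y, B.Adj x y → ∃ z, z ≠ x ∧ z ≠ y ∧ ¬(B.Adj x z ↔ B.Adj y z)

lemma TwinFree.subsingleton {B : SimpleGraph W} (hB : TwinFree B) {S : Set W}
    (hS : IsCliqueModule B S) : S.Subsingleton := by
  intro x hx y hy
  by_contra hxy
  obtain ⟨z, hzx, hzy, hz⟩ := hB x y (hS.1 hx hy hxy)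
  by_cases hzS : z ∈ S
  · exact hz (iff_of_true (hS.1 hx hzS hzx.symm) (hS.1 hy hzS hzy.symm))
  · exact hz (hS.2 x hx y hy z hzS)

lemma TwinFree.isEmpty_embedding_of_induce {B : SimpleGraph W} {H : SimpleGraph V} {S : Set V}
    {v : V} (hB : TwinFree B) (hS : IsCliqueModule H S) (hv : v ∈ S)
    (h : IsEmpty (B ↪g H.induce (S \ {v})ᶜ)) : IsEmpty (B ↪g H) := by
  classical
  refine ⟨fun f => h.false ?_⟩
  have hf : (f ⁻¹' S).Subsingleton := hB.subsingleton (hS.comap f)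
  let g : W → ↥(S \ {v})ᶜ := fun i =>
    if hi : f i ∈ S then ⟨v, fun h => h.2 rfl⟩ else ⟨f i, fun h => hi h.1⟩
  have hg : ∀ i, (f i ∈ S ∧ (g i : V) = v) ∨ (f i ∉ S ∧ (g i : V) = f i) := fun i => by
    by_cases hi : f i ∈ S <;> simp [g, hi]
  refine ⟨⟨g, fun i j hij => ?_⟩, fun {i j} => ?_⟩
  · have hij : (g i : V) = g j := congrArg Subtype.val hij
    rcases hg i with ⟨hi, hgi⟩ | ⟨hi, hgi⟩ <;>
      rcases hg j with ⟨hj, hgj⟩ | ⟨hj, hgj⟩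
    · exact hf hi hj
    · exact (hj (by rwa [← hgj, ← hij, hgi])).elim
    · exact (hi (by rwa [← hgi, hij, hgj])).elim
    · exact f.injective (hgi ▸ hgj ▸ hij)
  · change H.Adj (g i) (g j) ↔ B.Adj i j
    rw [← f.map_adj_iff]
    rcases hg i with ⟨hi, hgi⟩ | ⟨hi, hgi⟩ <;>
      rcases hg j with ⟨hj, hgj⟩ | ⟨hj, hgj⟩ <;> rw [hgi, hgj]
    · obtain rfl := hf hi hj
      simp
    · exact hS.2 v hv (f i) hi (f j) hj
    · rw [H.adj_comm, H.adj_comm (f i)]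
      exact hS.2 v hv (f j) hj (f i) hi

lemma Is3LeafPower.comap {H₁ : SimpleGraph W} {H₂ : SimpleGraph V} (f : H₁ ↪g H₂)
    (h : Is3LeafPower H₂) : Is3LeafPower H₁ :=
  ⟨⟨fun g => h.1.false (f.comp g)⟩, ⟨fun g => h.2.1.false (f.comp g)⟩,
    ⟨fun g => h.2.2.1.false (f.comp g)⟩,
    fun n hn => ⟨fun g => (h.2.2.2 n hn).false (f.comp g)⟩⟩

section

set_option synthInstance.maxSize 512

lemma bull_twinFree : TwinFree bull := by
  unfold TwinFree bull
  simp only [fromRel_adj]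
  decide

lemma dart_twinFree : TwinFree dart := by
  unfold TwinFree dart
  simp only [fromRel_adj]
  decide

lemma gem_twinFree : TwinFree gem := by
  unfold TwinFree gem
  simp only [fromRel_adj]
  decide

end

open scoped Fin.NatCast Fin.CommRing in
lemma cycleGraph_twinFree {n : ℕ} (hn : 4 ≤ n) : TwinFree (cycleGraph n) := by
  obtain ⟨m, rfl⟩ : ∃ m, n = m + 4 := ⟨n - 4, by omega⟩
  have hne : ∀ a : ℕ, 0 < a → a < m + 4 → (a : Fin (m + 4)) ≠ 0 := fun a h0 h => by
    rw [Ne, Fin.natCast_eq_zero]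
    exact fun hd => absurd (Nat.le_of_dvd h0 hd) (by omega)
  have h1 : (1 : Fin (m + 4)) ≠ 0 := one_ne_zero
  have h2 : (2 : Fin (m + 4)) ≠ 0 := by simpa using hne 2 (by omega) (by omega)
  have h3 : (3 : Fin (m + 4)) ≠ 0 := by simpa using hne 3 (by omega) (by omega)
  have hsucc : ∀ a : Fin (m + 4), ∃ z, z ≠ a ∧ z ≠ a + 1 ∧
      ¬((cycleGraph (m + 4)).Adj a z ↔ (cycleGraph (m + 4)).Adj (a + 1) z) := fun a => by
    refine ⟨a + 2, fun h => h2 (by linear_combination h), fun h => h1 (by linear_combination h),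
      ?_⟩
    rw [cycleGraph_adj (n := m + 2), cycleGraph_adj (n := m + 2)]
    refine fun h => ?_
    rcases h.mpr (.inr (by ring)) with h | h
    · exact h3 (by linear_combination -h)
    · exact h1 (by linear_combination h)
  intro x y hxy
  rcases (cycleGraph_adj (n := m + 2)).mp hxy with h | h
  · obtain ⟨z, hzy, hzx, hz⟩ := hsucc y
    obtain rfl : x = y + 1 := by linear_combination h
    exact ⟨z, hzx, hzy, fun h => hz h.symm⟩
  · obtain ⟨z, hzx, hzy, hz⟩ := hsucc x
    obtain rfl : y = x + 1 := by linear_combination h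
    exact ⟨z, hzx, hzy, hz⟩

lemma IsCliqueModule.is3LeafPower_of_induce {H : SimpleGraph V} {S : Set V} {v : V}
    (hS : IsCliqueModule H S) (hv : v ∈ S) (h : Is3LeafPower (H.induce (S \ {v})ᶜ)) :
    Is3LeafPower H :=
  ⟨bull_twinFree.isEmpty_embedding_of_induce hS hv h.1,
    dart_twinFree.isEmpty_embedding_of_induce hS hv h.2.1,
    gem_twinFree.isEmpty_embedding_of_induce hS hv h.2.2.1,
    fun n hn => (cycleGraph_twinFree hn).isEmpty_embedding_of_induce hS hv (h.2.2.2 n hn)⟩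

lemma exists_mem_forall_subset_of_card_lt {S : Set V} {F : Finset (Sym2 V)}
    (hF : F.card < S.ncard) : ∃ v ∈ S, ∀ e ∈ F, v ∈ e → ∀ x ∈ e, x ∈ S := by
  obtain ⟨v₀, -⟩ : S.Nonempty := Set.nonempty_of_ncard_ne_zero (by omega)
  have : Nonempty (Sym2 V) := ⟨s(v₀, v₀)⟩
  by_contra! h
  choose! φ hφF hφv w hw hwS using h
  have hinj : Set.InjOn φ S := fun a ha b hb hab => by
    by_contra hne
    have he : φ a = s(a, b) := (Sym2.mem_and_mem_iff hne).mp ⟨hφv a ha, hab ▸ hφv b hb⟩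
    rcases Sym2.mem_iff.mp (he ▸ hw a ha) with h | h <;> exact hwS a ha (by rwa [h])
  have := Set.ncard_le_ncard_of_injOn φ hφF hinj F.finite_toSet
  rw [Set.ncard_coe_finset] at this
  omega

lemma exists_subset_is3LeafPower_editGraph {G : SimpleGraph V} {K D : Set V}
    (hK : IsCliqueModule G K) (hD : D ⊆ K) {F : Finset (Sym2 V)} (hF : F.card < (K \ D).ncard)
    (h : Is3LeafPower ((editGraph G F).induce Dᶜ)) :
    ∃ F₀ ⊆ F, Is3LeafPower (editGraph G F₀) := by
  classical
  obtain ⟨v, ⟨hvK, hvD⟩, hv⟩ := exists_mem_forall_subset_of_card_lt hF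
  set F₀ := F.filter (fun e => ∀ x ∈ e, x ∉ K)
  refine ⟨F₀, Finset.filter_subset _ _, ?_⟩
  refine (hK.editGraph fun e he => (Finset.mem_filter.mp he).2).is3LeafPower_of_induce hvK ?_
  have hsub : (K \ {v})ᶜ ⊆ Dᶜ := fun x hx hxD => hx ⟨hD hxD, fun h => hvD (h ▸ hxD)⟩
  have hagree : ∀ a ∈ (K \ {v})ᶜ, ∀ b ∈ (K \ {v})ᶜ, a ≠ b →
      (s(a, b) ∈ (F₀ : Set (Sym2 V)) ↔ s(a, b) ∈ (F : Set (Sym2 V))) := by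
    have hout : ∀ x ∉ K \ {v}, ∀ y ∉ K \ {v}, x ≠ y → s(x, y) ∈ F → x ∉ K := by
      intro x hx y hy hxy he hxK
      obtain rfl : x = v := by_contra fun h => hx ⟨hxK, h⟩
      have hyK : y ∈ K := (hv _ he (Sym2.mem_mk_left _ _) y (Sym2.mem_mk_right _ _)).1
      exact hxy (by_contra fun h => hy ⟨hyK, Ne.symm h⟩)
    intro a ha b hb hab
    simp only [F₀, Finset.mem_coe, Finset.mem_filter]
    refine ⟨And.left, fun he => ⟨he, fun x hx => ?_⟩⟩
    rcases Sym2.mem_iff.mp hx with rfl | rfl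
    · exact hout x ha b hb hab he
    · exact hout x hb a ha hab.symm (Sym2.eq_swap ▸ he)
  rw [induce_editGraph_congr G hagree]
  exact h.comap (induceHomOfLE _ hsub)

lemma Has3LPEdition.induce {G : SimpleGraph V} {k : ℕ} (h : Has3LPEdition G k) (s : Set V) :
    Has3LPEdition (G.induce s) k := by
  classical
  obtain ⟨F, hFk, hF⟩ := h
  have hinj : Function.Injective (Sym2.map ((↑) : s → V)) :=
    Sym2.map.injective Subtype.val_injective
  refine ⟨F.preimage _ hinj.injOn, ?_, ?_⟩
  · exact (Finset.card_le_card_of_injOn _ (fun _ => Finset.mem_preimage.mp) hinj.injOn).trans hFk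
  · rw [Finset.coe_preimage, ← editGraph_induce]
    exact hF.comap (Embedding.induce s)

lemma Has3LPEdition.of_induce_compl {G : SimpleGraph V} {K D : Set V} {k : ℕ}
    (hK : IsCliqueModule G K) (hD : D ⊆ K) (hk : k < (K \ D).ncard)
    (h : Has3LPEdition (G.induce Dᶜ) k) : Has3LPEdition G k := by
  obtain ⟨F, hFk, hF⟩ := h
  let ι : Sym2 ↥Dᶜ ↪ Sym2 V := ⟨Sym2.map (↑), Sym2.map.injective Subtype.val_injective⟩
  have hF' : (editGraph G (F.map ι)).induce Dᶜ = editGraph (G.induce Dᶜ) F := by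
    rw [editGraph_induce, Finset.coe_map]
    exact congrArg _ (Set.preimage_image_eq _ ι.injective)
  obtain ⟨F₀, hF₀, h₀⟩ := exists_subset_is3LeafPower_editGraph hK hD
    (F := F.map ι) (by rw [Finset.card_map]; omega) (hF' ▸ hF)
  exact ⟨F₀, (Finset.card_le_card hF₀).trans (by rwa [Finset.card_map]), h₀⟩

end

theorem bigCriticalClique_reduction {V : Type*} [Fintype V] (G : SimpleGraph V) (k : ℕ)
    (K : Set V) (hK : IsCriticalClique G K) (hbig : k + 1 < K.ncard)
    (D : Set V) (hD : D ⊆ K) (hDcard : D.ncard = K.ncard - (k + 1)) :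
    Has3LPEdition G k ↔ Has3LPEdition (G.induce Dᶜ) k := by
  have hcard : (K \ D).ncard = k + 1 := by
    rw [Set.ncard_sdiff hD (Set.toFinite D)]
    omega
  exact ⟨fun h => h.induce Dᶜ, Has3LPEdition.of_induce_compl hK.2.1 hD (by omega)⟩
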